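/- Let n ≥ 1, ε ∈ (0,1), Φ ≥ 3, and let X and Y be n-point subsets of ℝ^d with 1 ≤ ‖x − y‖₁ ≤ Φ for all (x,y) ∈ X×Y. For integers s ≥ 0 define the level sets L_s = {(x,y) ∈ X×Y : (1+ε)^{s−1} ≤ ‖x−y‖₁ < (1+ε)^s} and prefix sets 𝓛_s = ∪_{0 ≤ r ≤ s} L_r. Let z ∈ [√n, n], let S be a multiset of ⌈(n²/z²)·ln Φ⌉ i.i.d. uniform samples from X×Y, and set t := min{s ≥ 0 : L_s ∩ S ≠ ∅} − 3. Then with probability at least 1 − 3/(ε·ln Φ) − Φ^{−1/10}, both |L_{t+3}| ≥ z²/(ln Φ)³ and |𝓛_{t+2}| ≤ 0.1·z² hold. -/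
import Mathlib


open Finset

/-- ℓ₁ distance on `ℝ^d`. -/
noncomputable def l1dist {d : ℕ} (u v : Fin d → ℝ) : ℝ := ∑ k, |u k - v k|

open Classical in
/-- The level set `L_s`: pairs `(i, j)` with `(1+ε)^{s−1} ≤ ‖xᵢ − yⱼ‖₁ < (1+ε)^s`. -/
noncomputable def levelSet {n d : ℕ} (x y : Fin n → Fin d → ℝ) (ε : ℝ) (s : ℕ) :
    Finset (Fin n × Fin n) :=
  Finset.univ.filter fun p =>
    (1 + ε) ^ ((s : ℤ) - 1) ≤ l1dist (x p.1) (y p.2) ∧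
      l1dist (x p.1) (y p.2) < (1 + ε) ^ (s : ℤ)

open Classical in
/-- The prefix set `𝓛_T = ∪_{0 ≤ r ≤ T} L_r` (empty for `T < 0`). -/
noncomputable def prefixSet {n d : ℕ} (x y : Fin n → Fin d → ℝ) (ε : ℝ) (T : ℤ) :
    Finset (Fin n × Fin n) :=
  Finset.univ.filter fun p => ∃ r : ℕ, (r : ℤ) ≤ T ∧ p ∈ levelSet x y ε r

/-- `t + 3`: the smallest index `s` such that some sample of `ω` lands in `L_s`. -/
noncomputable def firstHit {n d N : ℕ} (x y : Fin n → Fin d → ℝ) (ε : ℝ)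
    (ω : Fin N → Fin n × Fin n) : ℕ :=
  sInf {s : ℕ | ∃ k, ω k ∈ levelSet x y ε s}

/- auxiliary counting lemmas -/
lemma card_filter_forall_notin {α : Type*} [Fintype α] [DecidableEq α] (N : ℕ) (S : Finset α) :
    ((Finset.univ : Finset (Fin N → α)).filter fun ω => ∀ k, ω k ∉ S).card
      = Sᶜ.card ^ N := by
  have : ((Finset.univ : Finset (Fin N → α)).filter fun ω => ∀ k, ω k ∉ S)
      = Fintype.piFinset fun _ : Fin N => Sᶜ := by
    ext ω; simp [Fintype.mem_piFinset]
  rw [this, Fintype.card_piFinset]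
  simp

lemma card_filter_coord_mem {α : Type*} [Fintype α] [DecidableEq α] (N : ℕ) (k : Fin N)
    (S : Finset α) :
    ((Finset.univ : Finset (Fin N → α)).filter fun ω => ω k ∈ S).card
      = S.card * Fintype.card α ^ (N - 1) := by
  classical
  have : ((Finset.univ : Finset (Fin N → α)).filter fun ω => ω k ∈ S)
      = Fintype.piFinset fun j : Fin N => if j = k then S else Finset.univ := by
    ext ω
    simp only [mem_filter, mem_univ, true_and, Fintype.mem_piFinset]
    constructor
    · intro h j; by_cases hj : j = k <;> simp [hj, h]
    · intro h; have := h k; simpa using this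
  rw [this, Fintype.card_piFinset]
  rw [← Finset.mul_prod_erase Finset.univ _ (Finset.mem_univ k)]
  simp only [if_pos rfl]
  congr 1
  rw [Finset.prod_congr rfl (fun j hj => by
    rw [if_neg (Finset.ne_of_mem_erase hj)]), Finset.prod_const]
  simp [Finset.card_erase_of_mem]

lemma card_filter_exists_le {α : Type*} [Fintype α] [DecidableEq α] (N : ℕ) (S : Finset α) :
    (((Finset.univ : Finset (Fin N → α)).filter fun ω => ∃ k, ω k ∈ S).card : ℝ)
      ≤ N * S.card * (Fintype.card α : ℝ) ^ (N - 1) := by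
  classical
  have hsub : ((Finset.univ : Finset (Fin N → α)).filter fun ω => ∃ k, ω k ∈ S)
      ⊆ Finset.univ.biUnion fun k : Fin N =>
          (Finset.univ : Finset (Fin N → α)).filter fun ω => ω k ∈ S := by
    intro ω hω
    simp only [mem_filter, mem_univ, true_and] at hω
    obtain ⟨k, hk⟩ := hω
    exact Finset.mem_biUnion.2 ⟨k, Finset.mem_univ k, by simp [hk]⟩
  calc (((Finset.univ : Finset (Fin N → α)).filter fun ω => ∃ k, ω k ∈ S).card : ℝ)
      ≤ ((Finset.univ.biUnion fun k : Fin N =>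
          (Finset.univ : Finset (Fin N → α)).filter fun ω => ω k ∈ S).card : ℝ) := by
        exact_mod_cast Finset.card_le_card hsub
    _ ≤ ∑ k : Fin N, (((Finset.univ : Finset (Fin N → α)).filter fun ω => ω k ∈ S).card : ℝ) := by
        exact_mod_cast Finset.card_biUnion_le
    _ = N * S.card * (Fintype.card α : ℝ) ^ (N - 1) := by
        simp [card_filter_coord_mem]; ring

/- level structure lemmas -/
lemma exists_level {n d : ℕ} (x y : Fin n → Fin d → ℝ) (ε : ℝ) (hε : 0 < ε)
    (p : Fin n × Fin n) (hd : 1 ≤ l1dist (x p.1) (y p.2)) :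
    ∃ s : ℕ, 1 ≤ s ∧ p ∈ levelSet x y ε s := by
  set dd := l1dist (x p.1) (y p.2) with hdd
  have h1 : (1 : ℝ) < 1 + ε := by linarith
  obtain ⟨m, hm⟩ := pow_unbounded_of_one_lt dd h1
  have hne : ∃ m : ℕ, dd < (1 + ε) ^ m := ⟨m, hm⟩
  classical
  set s := Nat.find hne with hs
  have hspec : dd < (1 + ε) ^ s := Nat.find_spec hne
  have hs1 : 1 ≤ s := by
    by_contra h
    push_neg at h
    interval_cases s
    · simp at hspec; linarith
  have hlow : ¬ dd < (1 + ε) ^ (s - 1) := Nat.find_min hne (by omega)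
  push_neg at hlow
  refine ⟨s, hs1, ?_⟩
  simp only [levelSet, mem_filter, mem_univ, true_and]
  constructor
  · have : ((s : ℤ) - 1) = ((s - 1 : ℕ) : ℤ) := by omega
    rw [this, zpow_natCast]
    exact hlow
  · rw [zpow_natCast]; exact hspec

lemma level_le_bound {n d : ℕ} (x y : Fin n → Fin d → ℝ) (ε Φ : ℝ) (hε : 0 < ε)
    (hdist : ∀ i j, l1dist (x i) (y j) ≤ Φ)
    (s : ℕ) (hs1 : 1 ≤ s) (p : Fin n × Fin n) (hp : p ∈ levelSet x y ε s) :
    (s : ℝ) ≤ 1 + Real.log Φ / Real.log (1 + ε) := by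
  simp only [levelSet, mem_filter, mem_univ, true_and] at hp
  have h1 : (1 : ℝ) < 1 + ε := by linarith
  have hlogpos : 0 < Real.log (1 + ε) := Real.log_pos h1
  have hle : (1 + ε) ^ ((s : ℤ) - 1) ≤ Φ := le_trans hp.1 (hdist p.1 p.2)
  have hcast : ((s : ℤ) - 1) = ((s - 1 : ℕ) : ℤ) := by omega
  rw [hcast, zpow_natCast] at hle
  have hlog : ((s - 1 : ℕ) : ℝ) * Real.log (1 + ε) ≤ Real.log Φ := by
    have := Real.log_le_log (by positivity) hle
    rwa [Real.log_pow] at this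
  have h2 : ((s - 1 : ℕ) : ℝ) ≤ Real.log Φ / Real.log (1 + ε) :=
    (le_div_iff₀ hlogpos).2 hlog
  have h3 : ((s : ℝ) - 1) = ((s - 1 : ℕ) : ℝ) := by
    push_cast [Nat.cast_sub hs1]; ring
  linarith [h3 ▸ h2]

lemma log_one_add_ge (ε : ℝ) (h0 : 0 < ε) (h1 : ε ≤ 1) : ε * Real.log 2 ≤ Real.log (1 + ε) := by
  have hc := (strictConcaveOn_log_Ioi.concaveOn).2 (x := 1) (y := 2)
    (by norm_num : (1:ℝ) ∈ Set.Ioi (0:ℝ)) (by norm_num : (2:ℝ) ∈ Set.Ioi (0:ℝ))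
    (by linarith : (0:ℝ) ≤ 1 - ε) (le_of_lt h0) (by ring)
  simp only [smul_eq_mul, Real.log_one, mul_zero, zero_add] at hc
  have h : (1 - ε) * 1 + ε * 2 = 1 + ε := by ring
  rw [h] at hc
  exact hc


set_option maxHeartbeats 1600000 in
open Classical in
/-- taking `⌈(n²/z²)·ln Φ⌉` i.i.d. uniform samples from `X × Y` and letting
`t := min{s : L_s ∩ S ≠ ∅} − 3`, with probability at least `1 − 3/(ε·ln Φ) − Φ^{−1/10}`
we have `|L_{t+3}| ≥ z²/(ln Φ)³` and `|𝓛_{t+2}| ≤ 0.1·z²`.  (Probability is uniform over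
all sequences of `N` sampled index pairs.) -/
theorem last_small_prefix_correct {n d : ℕ} (hn : 1 ≤ n) (ε Φ : ℝ)
    (hε : ε ∈ Set.Ioo (0 : ℝ) 1) (hΦ : 3 ≤ Φ)
    (x y : Fin n → Fin d → ℝ)
    (hdist : ∀ i j, 1 ≤ l1dist (x i) (y j) ∧ l1dist (x i) (y j) ≤ Φ)
    (z : ℝ) (hz : Real.sqrt n ≤ z) (hz' : z ≤ n)
    (N : ℕ) (hN : N = ⌈(n : ℝ) ^ 2 / z ^ 2 * Real.log Φ⌉₊) :
    1 - 3 / (ε * Real.log Φ) - Φ ^ (-(1 : ℝ) / 10) ≤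
      (((Finset.univ : Finset (Fin N → Fin n × Fin n)).filter fun ω =>
          z ^ 2 / (Real.log Φ) ^ 3 ≤ ((levelSet x y ε (firstHit x y ε ω)).card : ℝ) ∧
          ((prefixSet x y ε ((firstHit x y ε ω : ℤ) - 1)).card : ℝ) ≤ 0.1 * z ^ 2).card
        : ℝ) / ((Finset.univ : Finset (Fin N → Fin n × Fin n)).card : ℝ) := by
  classical
  obtain ⟨hε0, hε1⟩ := hε
  have hΦ0 : (0:ℝ) < Φ := by linarith
  set L : ℝ := Real.log Φ with hLdef
  have hL1 : (1:ℝ) < L := by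
    have h3 : Real.log 3 ≤ L := Real.log_le_log (by norm_num) hΦ
    have : (1:ℝ) < Real.log 3 := by
      have := Real.exp_one_lt_d9
      have h := Real.log_lt_log (by positivity : (0:ℝ) < Real.exp 1) 
        (lt_of_lt_of_le (by linarith : Real.exp 1 < 3) (le_refl 3))
      rwa [Real.log_exp] at h
    linarith
  have hL0 : (0:ℝ) < L := by linarith
  have hn1 : (1:ℝ) ≤ n := by exact_mod_cast hn
  have hz1 : (1:ℝ) ≤ z := by
    refine le_trans ?_ hz
    rw [show (1:ℝ) = Real.sqrt 1 by simp]
    exact Real.sqrt_le_sqrt hn1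
  have hz0 : (0:ℝ) < z := by linarith
  -- N facts
  have hNpos : 0 < N := by
    rw [hN]; exact Nat.ceil_pos.mpr (by positivity)
  have hNge : (n:ℝ)^2 / z^2 * L ≤ N := by rw [hN]; exact Nat.le_ceil _
  have hNle : (N:ℝ) ≤ (n:ℝ)^2 / z^2 * L + 1 := by
    rw [hN]; exact (Nat.ceil_lt_add_one (by positivity)).le
  -- cardinality of sample space
  set c : ℕ := Fintype.card (Fin n × Fin n) with hcdef
  have hcval : (c : ℝ) = (n:ℝ)^2 := by
    have hcnn : c = n * n := by rw [hcdef, Fintype.card_prod, Fintype.card_fin]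
    rw [hcnn]; push_cast; ring
  have hcard : ((Finset.univ : Finset (Fin N → Fin n × Fin n)).card : ℝ) = (c:ℝ)^N := by
    rw [Finset.card_univ, Fintype.card_fun, Fintype.card_fin]
    push_cast
    all_goals ring
  have hc0 : (0:ℝ) < (c:ℝ) := by rw [hcval]; positivity
  have hcardpos : (0:ℝ) < ((Finset.univ : Finset (Fin N → Fin n × Fin n)).card : ℝ) := by
    rw [hcard]; positivity
  -- firstHit facts
  have hfh : ∀ ω : Fin N → Fin n × Fin n,
      1 ≤ firstHit x y ε ω ∧ ∃ k, ω k ∈ levelSet x y ε (firstHit x y ε ω) := by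
    intro ω
    obtain ⟨s, hs1, hmem⟩ := exists_level x y ε hε0 (ω ⟨0, hNpos⟩) (hdist _ _).1
    have hne : {s : ℕ | ∃ k, ω k ∈ levelSet x y ε s}.Nonempty := ⟨s, ⟨_, hmem⟩⟩
    have hmem' : ∃ k, ω k ∈ levelSet x y ε (firstHit x y ε ω) := Nat.sInf_mem hne
    obtain ⟨k, hk⟩ := hmem'
    refine ⟨?_, ⟨k, hk⟩⟩
    by_contra h
    push_neg at h
    have h0 : firstHit x y ε ω = 0 := by omega
    rw [h0] at hk
    simp only [levelSet, mem_filter, mem_univ, true_and, Nat.cast_zero, zpow_zero] at hk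
    have h3 := (hdist (ω k).1 (ω k).2).1
    linarith [hk.2]
  have hfh_le : ∀ (ω : Fin N → Fin n × Fin n) (s : ℕ) (k : Fin N),
      ω k ∈ levelSet x y ε s → firstHit x y ε ω ≤ s := by
    intro ω s k hk
    exact Nat.sInf_le ⟨k, hk⟩
  -- events
  set G := ((Finset.univ : Finset (Fin N → Fin n × Fin n)).filter fun ω =>
          z ^ 2 / L ^ 3 ≤ ((levelSet x y ε (firstHit x y ε ω)).card : ℝ) ∧
          ((prefixSet x y ε ((firstHit x y ε ω : ℤ) - 1)).card : ℝ) ≤ 0.1 * z ^ 2) with hG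
  set Abad := ((Finset.univ : Finset (Fin N → Fin n × Fin n)).filter fun ω =>
          ¬ (z ^ 2 / L ^ 3 ≤ ((levelSet x y ε (firstHit x y ε ω)).card : ℝ))) with hAbad
  set Bbad := ((Finset.univ : Finset (Fin N → Fin n × Fin n)).filter fun ω =>
          ¬ (((prefixSet x y ε ((firstHit x y ε ω : ℤ) - 1)).card : ℝ) ≤ 0.1 * z ^ 2)) with hBbad
  have hsplit : ((Finset.univ : Finset (Fin N → Fin n × Fin n)).card : ℝ)
      ≤ G.card + Abad.card + Bbad.card := by
    have hsub : (Finset.univ : Finset (Fin N → Fin n × Fin n)) ⊆ (G ∪ Abad) ∪ Bbad := by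
      intro ω _
      by_cases h1 : z ^ 2 / L ^ 3 ≤ ((levelSet x y ε (firstHit x y ε ω)).card : ℝ)
      · by_cases h2 : ((prefixSet x y ε ((firstHit x y ε ω : ℤ) - 1)).card : ℝ) ≤ 0.1 * z ^ 2
        · exact Finset.mem_union_left _ (Finset.mem_union_left _ (by
            rw [hG]; simp only [mem_filter, mem_univ, true_and]; exact ⟨h1, h2⟩))
        · exact Finset.mem_union_right _ (by
            rw [hBbad]; simp only [mem_filter, mem_univ, true_and]; exact h2)
      · exact Finset.mem_union_left _ (Finset.mem_union_right _ (by
          rw [hAbad]; simp only [mem_filter, mem_univ, true_and]; exact h1))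
    have := Finset.card_le_card hsub
    have h2 := Finset.card_union_le (G ∪ Abad) Bbad
    have h3 := Finset.card_union_le G Abad
    have : (Finset.univ : Finset (Fin N → Fin n × Fin n)).card ≤ G.card + Abad.card + Bbad.card := by
      omega
    exact_mod_cast this
  -- the trivial case
  by_cases hcrit : ε * L ≤ 3
  · have h1 : (1:ℝ) ≤ 3 / (ε * L) := by
      rw [le_div_iff₀ (by positivity)]
      linarith
    have h2 : (0:ℝ) < Φ ^ (-(1:ℝ)/10) := Real.rpow_pos_of_pos hΦ0 _
    have h3 : (0:ℝ) ≤ (G.card : ℝ) / ((Finset.univ : Finset (Fin N → Fin n × Fin n)).card : ℝ) :=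
      div_nonneg (Nat.cast_nonneg _) (Nat.cast_nonneg _)
    calc 1 - 3 / (ε * L) - Φ ^ (-(1:ℝ)/10) ≤ 0 := by linarith
      _ ≤ _ := h3
  push_neg at hcrit
  have hL3 : (3:ℝ) < L := lt_of_lt_of_le hcrit (by nlinarith)
  -- bound on Bbad
  have hBbound : (Bbad.card : ℝ) ≤ Φ ^ (-(1:ℝ)/10) * (c:ℝ)^N := by
    by_cases hex : ∃ s : ℕ, (0.1:ℝ) * z^2 < ((prefixSet x y ε (s:ℤ)).card : ℝ)
    · set s₀ := Nat.find hex with hs₀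
      set S := prefixSet x y ε (s₀ : ℤ) with hS
      have hm : (0.1:ℝ) * z^2 < (S.card : ℝ) := Nat.find_spec hex
      have hsubC : Bbad ⊆ (Finset.univ : Finset (Fin N → Fin n × Fin n)).filter
          fun ω => ∀ k, ω k ∉ S := by
        intro ω hω
        rw [hBbad] at hω
        simp only [mem_filter, mem_univ, true_and, not_le] at hω
        obtain ⟨hfh1, -⟩ := hfh ω
        have hcast : ((firstHit x y ε ω : ℤ) - 1) = ((firstHit x y ε ω - 1 : ℕ) : ℤ) := by omega
        rw [hcast] at hω
        have hs₀le : s₀ ≤ firstHit x y ε ω - 1 := Nat.find_min' hex hω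
        simp only [mem_filter, mem_univ, true_and]
        intro k hk
        rw [hS] at hk
        simp only [prefixSet, mem_filter, mem_univ, true_and] at hk
        obtain ⟨r, hr, hkr⟩ := hk
        have h1 := hfh_le ω r k hkr
        have hr' : r ≤ s₀ := by exact_mod_cast hr
        omega
      have hcount : (Bbad.card : ℝ) ≤ ((Sᶜ.card : ℝ))^N := by
        have := Finset.card_le_card hsubC
        rw [card_filter_forall_notin] at this
        exact_mod_cast this
      have hmc : S.card ≤ c := hcdef ▸ Finset.card_le_univ S
      have hScompl : ((Sᶜ.card : ℝ)) = (c:ℝ) - S.card := by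
        rw [Finset.card_compl, Nat.cast_sub hmc]
      refine le_trans hcount ?_
      rw [hScompl]
      have hmn : (S.card : ℝ) ≤ (c:ℝ) := by exact_mod_cast hmc
      have hexp1 : (c:ℝ) - S.card ≤ (c:ℝ) * Real.exp (-(S.card / (c:ℝ))) := by
        have h := Real.add_one_le_exp (-(S.card / (c:ℝ)))
        have : 1 - S.card/(c:ℝ) ≤ Real.exp (-(S.card / (c:ℝ))) := by linarith
        calc (c:ℝ) - S.card = (c:ℝ) * (1 - S.card/(c:ℝ)) := by field_simp
          _ ≤ (c:ℝ) * Real.exp (-(S.card / (c:ℝ))) := by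
              exact mul_le_mul_of_nonneg_left this (le_of_lt hc0)
      have hbase0 : (0:ℝ) ≤ (c:ℝ) - S.card := by linarith
      have hpow : ((c:ℝ) - S.card)^N ≤ ((c:ℝ) * Real.exp (-(S.card / (c:ℝ))))^N :=
        pow_le_pow_left₀ hbase0 hexp1 N
      refine le_trans hpow ?_
      rw [mul_pow, ← Real.exp_nat_mul]
      have hexple : Real.exp ((N:ℝ) * -(S.card / (c:ℝ))) ≤ Φ ^ (-(1:ℝ)/10) := by
        have hNS : (n:ℝ)^2 * L / 10 ≤ (N:ℝ) * S.card := by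
          have hmul := mul_le_mul hNge (le_of_lt hm) (by positivity)
            (Nat.cast_nonneg N)
          calc (n:ℝ)^2 * L / 10 = ((n:ℝ)^2/z^2*L) * (0.1*z^2) := by
                field_simp; ring
            _ ≤ _ := hmul
        have harg : L / 10 ≤ (N:ℝ) * ((S.card:ℝ) / (c:ℝ)) := by
          rw [hcval]
          have h2 : (N:ℝ) * ((S.card:ℝ) / (n:ℝ)^2) = (N:ℝ) * S.card / (n:ℝ)^2 := by
            ring
          rw [h2, le_div_iff₀ (by positivity)]
          calc L/10 * (n:ℝ)^2 = (n:ℝ)^2 * L / 10 := by ring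
            _ ≤ _ := hNS
        rw [Real.rpow_def_of_pos hΦ0]
        apply Real.exp_le_exp.2
        rw [← hLdef]
        linarith
      calc (c:ℝ)^N * Real.exp ((N:ℝ) * -(S.card / (c:ℝ)))
          ≤ (c:ℝ)^N * (Φ ^ (-(1:ℝ)/10)) := by
            exact mul_le_mul_of_nonneg_left hexple (by positivity)
        _ = Φ ^ (-(1:ℝ)/10) * (c:ℝ)^N := by ring
    · push_neg at hex
      have : Bbad = ∅ := by
        rw [hBbad]
        rw [Finset.filter_eq_empty_iff]
        intro ω _
        push_neg
        obtain ⟨hfh1, -⟩ := hfh ω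
        have hcast : ((firstHit x y ε ω : ℤ) - 1) = ((firstHit x y ε ω - 1 : ℕ) : ℤ) := by omega
        rw [hcast]
        exact hex _
      rw [this]
      simp only [Finset.card_empty, Nat.cast_zero]
      positivity
  -- bound on Abad
  have hAbound : (Abad.card : ℝ) ≤ 3 / (ε * L) * (c:ℝ)^N := by
    set smax : ℕ := 1 + ⌈L / Real.log (1 + ε)⌉₊ with hsmax
    set θ : ℝ := z^2 / L^3 with hθ
    set D := (Finset.Icc 1 smax).filter
      (fun s => ((levelSet x y ε s).card : ℝ) < θ) with hD
    have hlog1ε : 0 < Real.log (1 + ε) := Real.log_pos (by linarith)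
    have hsubD : Abad ⊆ D.biUnion fun s =>
        (Finset.univ : Finset (Fin N → Fin n × Fin n)).filter
          fun ω => ∃ k, ω k ∈ levelSet x y ε s := by
      intro ω hω
      rw [hAbad] at hω
      simp only [mem_filter, mem_univ, true_and, not_le] at hω
      obtain ⟨hfh1, k, hk⟩ := hfh ω
      refine Finset.mem_biUnion.2 ⟨firstHit x y ε ω, ?_, ?_⟩
      · rw [hD]
        simp only [mem_filter, Finset.mem_Icc]
        refine ⟨⟨hfh1, ?_⟩, hω⟩
        have hb := level_le_bound x y ε Φ hε0 (fun i j => (hdist i j).2)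
          (firstHit x y ε ω) hfh1 (ω k) hk
        have h1 : ((firstHit x y ε ω : ℝ) - 1) ≤ L / Real.log (1 + ε) := by linarith
        have h2 : L / Real.log (1 + ε) ≤ (⌈L / Real.log (1 + ε)⌉₊ : ℝ) := Nat.le_ceil _
        have h3 : ((firstHit x y ε ω : ℝ)) ≤ 1 + (⌈L / Real.log (1 + ε)⌉₊ : ℝ) := by linarith
        rw [hsmax]
        exact_mod_cast h3
      · simp only [mem_filter, mem_univ, true_and]
        exact ⟨k, hk⟩
    have hθ0 : 0 ≤ θ := by rw [hθ]; positivity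
    have step1 : (Abad.card : ℝ) ≤ (smax : ℝ) * ((N:ℝ) * θ * (c:ℝ)^(N-1)) := by
      have hA1 : (Abad.card : ℝ) ≤ ((D.biUnion fun s =>
          (Finset.univ : Finset (Fin N → Fin n × Fin n)).filter
            fun ω => ∃ k, ω k ∈ levelSet x y ε s).card : ℝ) := by
        exact_mod_cast Finset.card_le_card hsubD
      have hA2 : ((D.biUnion fun s =>
          (Finset.univ : Finset (Fin N → Fin n × Fin n)).filter
            fun ω => ∃ k, ω k ∈ levelSet x y ε s).card : ℝ)
          ≤ ∑ s ∈ D, (((Finset.univ : Finset (Fin N → Fin n × Fin n)).filter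
            fun ω => ∃ k, ω k ∈ levelSet x y ε s).card : ℝ) := by
        exact_mod_cast Finset.card_biUnion_le
      have h1 : (Abad.card : ℝ) ≤ ∑ s ∈ D,
          (((Finset.univ : Finset (Fin N → Fin n × Fin n)).filter
            fun ω => ∃ k, ω k ∈ levelSet x y ε s).card : ℝ) := le_trans hA1 hA2
      refine le_trans h1 ?_
      have h2 : ∀ s ∈ D, (((Finset.univ : Finset (Fin N → Fin n × Fin n)).filter
            fun ω => ∃ k, ω k ∈ levelSet x y ε s).card : ℝ) ≤ (N:ℝ) * θ * (c:ℝ)^(N-1) := by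
        intro s hs
        rw [hD] at hs
        simp only [mem_filter, Finset.mem_Icc] at hs
        refine le_trans (card_filter_exists_le N (levelSet x y ε s)) ?_
        rw [← hcdef]
        have hNnn : (0:ℝ) ≤ (N:ℝ) := Nat.cast_nonneg N
        have hcNn : (0:ℝ) ≤ (c:ℝ)^(N-1) := by positivity
        have h3 : (N:ℝ) * (((levelSet x y ε s).card : ℕ) : ℝ) ≤ (N:ℝ) * θ :=
          mul_le_mul_of_nonneg_left hs.2.le hNnn
        exact mul_le_mul_of_nonneg_right h3 hcNn
      calc ∑ s ∈ D, (((Finset.univ : Finset (Fin N → Fin n × Fin n)).filter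
            fun ω => ∃ k, ω k ∈ levelSet x y ε s).card : ℝ)
          ≤ ∑ _s ∈ D, ((N:ℝ) * θ * (c:ℝ)^(N-1)) := Finset.sum_le_sum h2
        _ = (D.card : ℝ) * ((N:ℝ) * θ * (c:ℝ)^(N-1)) := by
            rw [Finset.sum_const, nsmul_eq_mul]
        _ ≤ (smax : ℝ) * ((N:ℝ) * θ * (c:ℝ)^(N-1)) := by
            have hDcard : D.card ≤ smax := by
              refine le_trans (Finset.card_le_card (Finset.filter_subset _ _)) ?_
              rw [Nat.card_Icc]; omega
            have hDs : (D.card : ℝ) ≤ (smax : ℝ) := by exact_mod_cast hDcard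
            have hnn : (0:ℝ) ≤ (N:ℝ) * θ * (c:ℝ)^(N-1) := by positivity
            exact mul_le_mul_of_nonneg_right hDs hnn
    -- real arithmetic: smax * N * θ ≤ 3/(ε L) * c
    have step2 : (smax : ℝ) * ((N:ℝ) * θ) ≤ 3 / (ε * L) * (c:ℝ) := by
      have hl2lb : (0.6931471803:ℝ) < Real.log 2 := Real.log_two_gt_d9
      have hl2ub : Real.log 2 < 0.6931471808 := Real.log_two_lt_d9
      have hsmaxle : (smax : ℝ) ≤ 2 + L / (ε * Real.log 2) := by
        rw [hsmax]
        push_cast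
        have h1 : (⌈L / Real.log (1 + ε)⌉₊ : ℝ) < L / Real.log (1 + ε) + 1 :=
          Nat.ceil_lt_add_one (by positivity)
        have h2 : L / Real.log (1 + ε) ≤ L / (ε * Real.log 2) := by
          apply div_le_div_of_nonneg_left (le_of_lt hL0) (by positivity)
          exact log_one_add_ge ε hε0 (le_of_lt hε1)
        linarith
      have hNθ : (N:ℝ) * θ ≤ (n:ℝ)^2 * (L + 1) / L^3 := by
        rw [hθ]
        have hstep : (N:ℝ) * z^2 ≤ (n:ℝ)^2 * (L+1) := by
          have h1 : (N:ℝ) * z^2 ≤ ((n:ℝ)^2/z^2*L + 1) * z^2 :=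
            mul_le_mul_of_nonneg_right hNle (by positivity)
          have h2 : ((n:ℝ)^2/z^2*L + 1) * z^2 = (n:ℝ)^2 * L + z^2 := by
            field_simp
          have hz2n2 : z^2 ≤ (n:ℝ)^2 := pow_le_pow_left₀ hz0.le hz' 2
          rw [h2] at h1
          nlinarith [hL0, hn1]
        calc (N:ℝ) * (z^2/L^3) = (N:ℝ)*z^2/L^3 := by ring
          _ ≤ (n:ℝ)^2*(L+1)/L^3 := by gcongr
      have key : (2 + L / (ε * Real.log 2)) * ((n:ℝ)^2 * (L + 1) / L^3)
          ≤ 3 / (ε * L) * (c:ℝ) := by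
        rw [hcval]
        set l2 := Real.log 2
        have hεl2 : (0:ℝ) < ε * l2 := by positivity
        have hεL : (0:ℝ) < ε * L := by positivity
        have expand : (2 + L / (ε * l2)) * ((n:ℝ)^2 * (L+1) / L^3)
            = ((2 * ε * l2 + L) * (L+1) * (n:ℝ)^2) / (ε * l2 * L^3) := by
          field_simp
        rw [expand, div_mul_eq_mul_div, div_le_div_iff₀ (by positivity) hεL]
        have hkey : (2 * ε * l2 + L) * (L + 1) * L ≤ 3 * L^3 * l2 := by
          have hl2nn : (0:ℝ) ≤ l2 := by linarith
          have hLL : (0:ℝ) ≤ L^2 + L := by nlinarith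
          have hεle : 2*ε*l2*(L^2+L) ≤ 2*l2*(L^2+L) := by
            nlinarith [mul_nonneg (mul_nonneg (by linarith : (0:ℝ) ≤ 1-ε) hl2nn) hLL]
          have hq : (0:ℝ) ≤ 3*L^3-2*L^2-2*L := by nlinarith
          have hmono : 0.6931471803*(3*L^3-2*L^2-2*L) ≤ l2*(3*L^3-2*L^2-2*L) := by
            nlinarith [mul_nonneg (by linarith : (0:ℝ) ≤ l2 - 0.6931471803) hq]
          have hquad : (0:ℝ) ≤ 1.0794415409*L^2 - 2.3862943606*L - 1.3862943606 := by
            nlinarith [sq_nonneg (L-3)]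
          nlinarith [hεle, hmono, mul_nonneg hL0.le hquad]
        calc (2 * ε * l2 + L) * (L + 1) * (n:ℝ)^2 * (ε * L)
            = ((2 * ε * l2 + L) * (L + 1) * L) * (ε * (n:ℝ)^2) := by ring
          _ ≤ (3 * L^3 * l2) * (ε * (n:ℝ)^2) := by
              apply mul_le_mul_of_nonneg_right hkey (by positivity)
          _ = 3 * (n:ℝ)^2 * (ε * l2 * L^3) := by ring
      have hNθnn : (0:ℝ) ≤ (N:ℝ) * θ := by positivity
      have hsm0 : (0:ℝ) ≤ (smax:ℝ) := by positivity
      calc (smax : ℝ) * ((N:ℝ) * θ) ≤ (2 + L / (ε * Real.log 2)) * ((n:ℝ)^2 * (L+1)/L^3) := by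
            apply mul_le_mul hsmaxle hNθ hNθnn (by positivity)
        _ ≤ 3 / (ε * L) * (c:ℝ) := key
    -- combine
    refine le_trans step1 ?_
    have hcN : (c:ℝ)^N = (c:ℝ) * (c:ℝ)^(N-1) := by
      rw [← pow_succ']
      congr 1
      omega
    rw [hcN]
    calc (smax : ℝ) * ((N:ℝ) * θ * (c:ℝ)^(N-1))
        = ((smax : ℝ) * ((N:ℝ) * θ)) * (c:ℝ)^(N-1) := by ring
      _ ≤ (3 / (ε * L) * (c:ℝ)) * (c:ℝ)^(N-1) := by
          apply mul_le_mul_of_nonneg_right step2 (by positivity)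
      _ = 3 / (ε * L) * ((c:ℝ) * (c:ℝ)^(N-1)) := by ring
  -- final assembly
  rw [le_div_iff₀ hcardpos]
  rw [hcard] at hsplit ⊢
  nlinarith [hAbound, hBbound, hsplit]
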